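/- Period-0 inflation is strictly increasing in the amount of government debt when the Taylor-rule intercept is fixed at the natural rate (Proposition 4): suppose 0 ≤ b̄ < bmax, r* > −1, Dh(b̄, r*) > 0, Dl(b̄, r*) > 0 and F(b̄, r*) = 0 (i.e., r* is the natural rate at debt level b̄). Let h : ℝ → ℝ be differentiable at b̄ with h(b̄) = 1, and suppose there is an open interval U containing b̄ such that G(b, h(b)) = 0 for all b ∈ U. Then the derivative of h at b̄ is strictly positive. -/

import Mathlib

/-!
Differentiating `G (b, h b) = 0` at `b̄`, where `h b̄ = 1` and the Taylor rule gives `r = r*`,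
yields `h'(b̄) · G_π + G_b = 0`. The inflation partial `G_π` is positive. Since
`ρ (zh - 1) = (1 - ρ) (1 - zl)`, the debt partial is
`G_b = β (1 - β) (1 + r*)² ρ (zh - 1) (1 / Dh² - 1 / Dl²)`, negative as soon as `Dl < Dh`, that is
as soon as `(1 - β) (1 + r*) b̄ < w`. This follows from `b̄ < bmax` once `β (1 + r*) ≤ 1`, and that
is the harmonic–arithmetic mean inequality applied to `F (b̄, r*) = 0`, because
`ρ Dh + (1 - ρ) Dl = w`.
-/

/-- High-productivity stationary consumption denominator:
Dh(b,r) = w·zh + (1−β)·(1+r)·b·(1−zh) with w = (ε−1)/ε. -/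
noncomputable def Dh (β ε zh : ℝ) (b r : ℝ) : ℝ :=
  ((ε - 1) / ε) * zh + (1 - β) * (1 + r) * b * (1 - zh)

/-- Low-productivity stationary consumption denominator:
Dl(b,r) = w·zl + (1−β)·(1+r)·b·(1−zl) with w = (ε−1)/ε. -/
noncomputable def Dl (β ε zl : ℝ) (b r : ℝ) : ℝ :=
  ((ε - 1) / ε) * zl + (1 - β) * (1 + r) * b * (1 - zl)

/-- Natural-rate equation residual:
F(b,r) = β·ρ·(1+r)/Dh(b,r) + β·(1−ρ)·(1+r)/Dl(b,r) − ε/(ε−1). -/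
noncomputable def F (β ε ρ zh zl : ℝ) (b r : ℝ) : ℝ :=
  β * ρ * (1 + r) / Dh β ε zh b r
    + β * (1 - ρ) * (1 + r) / Dl β ε zl b r
    - ε / (ε - 1)

/-- Period-0 equilibrium residual under the Taylor rule:
G(b,π) = β·ρ·(1+r*+θ(π−1))/Dh(b,r*+θ(π−1)) + β·(1−ρ)·(1+r*+θ(π−1))/Dl(b,r*+θ(π−1))
        − ε/(ε−1+φ(π−1)π). -/
noncomputable def G (β ε ρ zh zl θ φ rstar : ℝ) (b π : ℝ) : ℝ :=
  β * ρ * (1 + rstar + θ * (π - 1)) / Dh β ε zh b (rstar + θ * (π - 1))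
    + β * (1 - ρ) * (1 + rstar + θ * (π - 1)) / Dl β ε zl b (rstar + θ * (π - 1))
    - ε / (ε - 1 + φ * (π - 1) * π)

open Filter Topology

lemma inv_le_weighted_inv {ρ x y : ℝ} (hρ0 : 0 ≤ ρ) (hρ1 : ρ ≤ 1) (hx : 0 < x) (hy : 0 < y) :
    (ρ * x + (1 - ρ) * y)⁻¹ ≤ ρ / x + (1 - ρ) / y := by
  simpa [smul_eq_mul, div_eq_mul_inv] using
    (convexOn_zpow (𝕜 := ℝ) (-1)).2 (Set.mem_Ioi.2 hx) (Set.mem_Ioi.2 hy) hρ0 (sub_nonneg.2 hρ1)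
      (add_sub_cancel ρ 1)

section Economy

variable {β ε ρ zh zl θ φ rstar b r : ℝ}

lemma Dl_eq_Dh : Dl = Dh := rfl

lemma weighted_Dh_add_Dl (hmean : ρ * zh + (1 - ρ) * zl = 1) :
    ρ * Dh β ε zh b r + (1 - ρ) * Dl β ε zl b r = (ε - 1) / ε := by
  unfold Dh Dl
  linear_combination ((ε - 1) / ε - (1 - β) * (1 + r) * b) * hmean

lemma Dh_sub_Dl :
    Dh β ε zh b r - Dl β ε zl b r = (zh - zl) * ((ε - 1) / ε - (1 - β) * (1 + r) * b) := by
  unfold Dh Dl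
  ring

lemma mul_one_add_le_one_of_F_eq_zero (hε : 1 < ε) (hρ0 : 0 ≤ ρ) (hρ1 : ρ ≤ 1)
    (hmean : ρ * zh + (1 - ρ) * zl = 1) (hβ : 0 ≤ β) (hr : -1 < r)
    (hDh : 0 < Dh β ε zh b r) (hDl : 0 < Dl β ε zl b r) (hF : F β ε ρ zh zl b r = 0) :
    β * (1 + r) ≤ 1 := by
  have hjensen : ((ε - 1) / ε)⁻¹ ≤ ρ / Dh β ε zh b r + (1 - ρ) / Dl β ε zl b r := by
    rw [← weighted_Dh_add_Dl hmean]
    exact inv_le_weighted_inv hρ0 hρ1 hDh hDl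
  have hF' : β * (1 + r) * (ρ / Dh β ε zh b r + (1 - ρ) / Dl β ε zl b r) = ((ε - 1) / ε)⁻¹ := by
    rw [inv_div]
    unfold F at hF
    linear_combination hF
  have hβr : 0 ≤ β * (1 + r) := mul_nonneg hβ (by linarith)
  have hw : 0 < (ε - 1) / ε := div_pos (by linarith) (by linarith)
  refine le_of_mul_le_mul_right ?_ (inv_pos.2 hw)
  calc β * (1 + r) * ((ε - 1) / ε)⁻¹
      ≤ β * (1 + r) * (ρ / Dh β ε zh b r + (1 - ρ) / Dl β ε zl b r) :=
        mul_le_mul_of_nonneg_left hjensen hβr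
    _ = 1 * ((ε - 1) / ε)⁻¹ := by rw [hF', one_mul]

lemma Dl_lt_Dh (hβ0 : 0 < β) (hβ1 : β < 1) (hz : zl < zh) (hb0 : 0 ≤ b)
    (hb1 : b < (ε - 1) / ε * (β / (1 - β))) (hβr : β * (1 + r) ≤ 1) :
    Dl β ε zl b r < Dh β ε zh b r := by
  have hb1' : (1 - β) * b < (ε - 1) / ε * β := by
    rw [← mul_div_assoc, lt_div_iff₀ (by linarith)] at hb1
    linarith
  have hservice : (1 - β) * (1 + r) * b < (ε - 1) / ε := by
    refine lt_of_mul_lt_mul_left ?_ hβ0.le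
    nlinarith [mul_le_mul_of_nonneg_left hβr (mul_nonneg (sub_nonneg.2 hβ1.le) hb0)]
  rw [← sub_pos, Dh_sub_Dl]
  exact mul_pos (sub_pos.2 hz) (sub_pos.2 hservice)

lemma hasDerivAt_one_add_div_Dh (β ε z : ℝ) {r : ℝ → ℝ} {r' x : ℝ} (hr : HasDerivAt r r' x)
    (hD : Dh β ε z x (r x) ≠ 0) :
    HasDerivAt (fun y => (1 + r y) / Dh β ε z y (r y))
      (((ε - 1) / ε * z * r' + (1 - β) * (1 + r x) ^ 2 * (z - 1)) / Dh β ε z x (r x) ^ 2) x := by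
  have hD' : HasDerivAt (fun y => Dh β ε z y (r y))
      ((1 - β) * (r' * x + (1 + r x) * 1) * (1 - z)) x :=
    ((((hr.const_add 1).mul (hasDerivAt_id' x)).const_mul (1 - β)).mul_const (1 - z)).const_add
      ((ε - 1) / ε * z) |>.congr_of_eventuallyEq
        (.of_forall fun y => by simp only [Dh, Pi.mul_apply]; ring)
  refine ((hr.const_add 1).div hD' hD).congr_deriv ?_
  unfold Dh
  ring

-- The partial derivatives of `G` in `π` and in `b` at a point `(b, 1)`.
noncomputable def inflationPartialG (β ε ρ zh zl θ φ rstar b : ℝ) : ℝ :=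
  β * θ * ((ε - 1) / ε) * (ρ * zh / Dh β ε zh b rstar ^ 2 + (1 - ρ) * zl / Dl β ε zl b rstar ^ 2)
    + ε * φ / (ε - 1) ^ 2

noncomputable def debtPartialG (β ε ρ zh zl rstar b : ℝ) : ℝ :=
  β * (1 - β) * (1 + rstar) ^ 2 *
    (ρ * (zh - 1) / Dh β ε zh b rstar ^ 2 + (1 - ρ) * (zl - 1) / Dl β ε zl b rstar ^ 2)

lemma hasDerivAt_G_comp {h : ℝ → ℝ} {d : ℝ} (hh : HasDerivAt h d b) (hb : h b = 1)
    (hDh : Dh β ε zh b rstar ≠ 0) (hDl : Dl β ε zl b rstar ≠ 0) (hε : ε - 1 ≠ 0) :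
    HasDerivAt (fun x => G β ε ρ zh zl θ φ rstar x (h x))
      (d * inflationPartialG β ε ρ zh zl θ φ rstar b + debtPartialG β ε ρ zh zl rstar b) b := by
  have hR : HasDerivAt (fun x => rstar + θ * (h x - 1)) (θ * d) b := by
    simpa using ((hh.sub_const 1).const_mul θ).const_add rstar
  have hRb : rstar + θ * (h b - 1) = rstar := by simp [hb]
  have hcost : HasDerivAt (fun x => ε - 1 + φ * (h x - 1) * h x)
      (φ * d * h b + φ * (h b - 1) * d) b := by
    simpa using (((hh.sub_const 1).const_mul φ).mul hh).const_add (ε - 1)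
  have hhigh := hasDerivAt_one_add_div_Dh β ε zh hR (by rwa [hRb])
  have hlow := hasDerivAt_one_add_div_Dh β ε zl hR (by rwa [hRb])
  have hmarkup := (hasDerivAt_const b ε).div hcost (by simpa [hb] using hε)
  have hsum := ((hhigh.const_mul (β * ρ)).add (hlow.const_mul (β * (1 - ρ)))).sub hmarkup
  refine (hsum.congr_of_eventuallyEq (.of_forall fun x => ?_)).congr_deriv ?_
  · simp only [G, Dl_eq_Dh, Pi.add_apply, Pi.sub_apply, Pi.div_apply]
    ring
  · rw [hRb, hb]
    simp only [inflationPartialG, debtPartialG, Dl_eq_Dh]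
    ring

lemma inflationPartialG_pos (hβ : 0 ≤ β) (hθ : 0 ≤ θ) (hε : 1 < ε) (hρ0 : 0 ≤ ρ) (hρ1 : ρ ≤ 1)
    (hzh : 0 ≤ zh) (hzl : 0 ≤ zl) (hφ : 0 < φ) :
    0 < inflationPartialG β ε ρ zh zl θ φ rstar b := by
  have hρ1' : 0 ≤ 1 - ρ := sub_nonneg.2 hρ1
  have hε1 : 0 < ε - 1 := sub_pos.2 hε
  unfold inflationPartialG
  positivity

lemma debtPartialG_neg (hβ0 : 0 < β) (hβ1 : β < 1) (hr : rstar ≠ -1) (hρ0 : 0 < ρ) (hzh : 1 < zh)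
    (hmean : ρ * zh + (1 - ρ) * zl = 1)
    (hDl : 0 < Dl β ε zl b rstar) (hDlDh : Dl β ε zl b rstar < Dh β ε zh b rstar) :
    debtPartialG β ε ρ zh zl rstar b < 0 := by
  have hsq : 1 / Dh β ε zh b rstar ^ 2 < 1 / Dl β ε zl b rstar ^ 2 :=
    one_div_lt_one_div_of_lt (by positivity) (pow_lt_pow_left₀ hDlDh hDl.le two_ne_zero)
  have hscale : 0 < β * (1 - β) * (1 + rstar) ^ 2 * (ρ * (zh - 1)) := by
    have : 1 + rstar ≠ 0 := fun h => hr (by linarith)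
    have := sub_pos.2 hβ1
    have := sub_pos.2 hzh
    positivity
  have hsplit : debtPartialG β ε ρ zh zl rstar b = β * (1 - β) * (1 + rstar) ^ 2 * (ρ * (zh - 1)) *
      (1 / Dh β ε zh b rstar ^ 2 - 1 / Dl β ε zl b rstar ^ 2) := by
    unfold debtPartialG
    linear_combination (β * (1 - β) * (1 + rstar) ^ 2 / Dl β ε zl b rstar ^ 2) * hmean
  rw [hsplit]
  exact mul_neg_of_pos_of_neg hscale (sub_neg.2 hsq)

end Economy

/-- Proposition 4: period-0 inflation is strictly increasing in the amount of
government debt when the Taylor-rule intercept is fixed at the natural rate: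
if h locally solves G(b, h(b)) = 0 around b̄ with h(b̄) = 1 and h is
differentiable at b̄, then h'(b̄) > 0. -/
theorem stmt_16 (β ε ρ zh zl θ φ rstar : ℝ)
    (hβ0 : 0 < β) (hβ1 : β < 1) (hε : 1 < ε)
    (hρ0 : 0 < ρ) (hρ1 : ρ < 1)
    (hzl0 : 0 < zl) (hzl1 : zl < 1) (hzh : 1 < zh)
    (hmean : ρ * zh + (1 - ρ) * zl = 1)
    (hθ : 0 < θ) (hφ : 0 < φ)
    (bbar : ℝ) (hb0 : 0 ≤ bbar)
    (hb1 : bbar < ((ε - 1) / ε) * (β / (1 - β)))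
    (hr : rstar > -1)
    (hDh : Dh β ε zh bbar rstar > 0) (hDl : Dl β ε zl bbar rstar > 0)
    (hF : F β ε ρ zh zl bbar rstar = 0)
    (h : ℝ → ℝ) (hdiff : DifferentiableAt ℝ h bbar) (hone : h bbar = 1)
    (lo hi : ℝ) (hlo : lo < bbar) (hhi : bbar < hi)
    (hsol : ∀ b ∈ Set.Ioo lo hi, G β ε ρ zh zl θ φ rstar b (h b) = 0) :
    0 < deriv h bbar := by
  have hG := hasDerivAt_G_comp (ρ := ρ) (θ := θ) (φ := φ) hdiff.hasDerivAt hone hDh.ne' hDl.ne'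
    (sub_ne_zero.2 hε.ne')
  have hlocal : (fun b => G β ε ρ zh zl θ φ rstar b (h b)) =ᶠ[𝓝 bbar] fun _ => 0 :=
    eventually_of_mem (Ioo_mem_nhds hlo hhi) hsol
  have hzero := hG.unique ((hasDerivAt_const bbar 0).congr_of_eventuallyEq hlocal)
  have hβr := mul_one_add_le_one_of_F_eq_zero hε hρ0.le hρ1.le hmean hβ0.le hr hDh hDl hF
  have hDlDh := Dl_lt_Dh hβ0 hβ1 (hzl1.trans hzh) hb0 hb1 hβr
  have hP := inflationPartialG_pos (rstar := rstar) (b := bbar) hβ0.le hθ.le hε hρ0.le hρ1.le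
    (zero_le_one.trans hzh.le) hzl0.le hφ
  have hQ := debtPartialG_neg hβ0 hβ1 hr.ne' hρ0 hzh hmean hDl hDlDh
  exact pos_of_mul_pos_left (by linarith) hP.le
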